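/- The limit as n → ∞ of (log |B_n|)/f_{2n-1} exists and equals (1/τ³)·log 2, where τ = (1+√5)/2 is the golden mean. -/

import Mathlib

/-- The two-letter alphabet. -/
inductive Letter : Type
  | a : Letter
  | b : Letter
deriving DecidableEq

/-- A word is a finite sequence of letters. -/
abbrev Word := List Letter

/-- Concatenation set `UV = {uv : u ∈ U, v ∈ V}`. -/
def concatSet (U V : Set Word) : Set Word := {w | ∃ u ∈ U, ∃ v ∈ V, w = u ++ v}

mutual
  /-- The sets `A_n` of inflated words (indexed so that `Aset 1 = {a}`). -/
  def Aset : ℕ → Set Word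
    | 0 => ∅
    | 1 => {[Letter.a]}
    | n + 2 => concatSet (Bset (n + 1)) (concatSet (Aset (n + 1)) (Aset (n + 1)))
  /-- The sets `B_n` of inflated words (indexed so that `Bset 1 = {b}`). -/
  def Bset : ℕ → Set Word
    | 0 => ∅
    | 1 => {[Letter.b]}
    | n + 2 => concatSet (Aset (n + 1)) (Bset (n + 1)) ∪ concatSet (Bset (n + 1)) (Aset (n + 1))
end

/-- The sub-word `w[a,b] = w_a w_{a+1} … w_b` (1-indexed). -/
def wordSlice (w : Word) (i j : ℕ) : Word := (w.drop (i - 1)).take (j - i + 1)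

/-- `W[a,b] = {w[a,b] : w ∈ W}`. -/
def setSlice (W : Set Word) (i j : ℕ) : Set Word := {x | ∃ w ∈ W, x = wordSlice w i j}

/-- `x` is a sub-word (contiguous factor) of `w`. -/
def IsFactor (x w : Word) : Prop := ∃ u v : Word, w = u ++ x ++ v

/-- `F(S, m)`: the set of all sub-words of length `m` of words in `S`. -/
def FactorSet (S : Set Word) (m : ℕ) : Set Word :=
  {x | x.length = m ∧ ∃ w ∈ S, IsFactor x w}

/-- `F(A, m) = ⋃_{n ≥ 1} F(A_n, m)`. -/
def FA (m : ℕ) : Set Word := ⋃ n ∈ {n : ℕ | 1 ≤ n}, FactorSet (Aset n) m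

/-- `F(B, m) = ⋃_{n ≥ 1} F(B_n, m)`. -/
def FB (m : ℕ) : Set Word := ⋃ n ∈ {n : ℕ | 1 ≤ n}, FactorSet (Bset n) m

/-- The golden mean `τ = (1 + √5)/2`. -/
noncomputable def tau : ℝ := (1 + Real.sqrt 5) / 2

/-!
Every word of `A_{n+1}` has length `F_{2n+2}` and ends in `a`, every word of `B_{n+1}` has length
`F_{2n+1}`, and every word of `A_{n+2}` has the letter `b` at position `F_{2n+2}`. Since all words of
`A_{n+1}` have the same length, concatenation is injective on `A_{n+1} × V`; and the letter at
position `|A_{n+1}|` separates `A_{n+1}B_{n+1}` from `B_{n+1}A_{n+1}`. Hence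
`|A_{n+2}| = |B_{n+1}| |A_{n+1}|²` and `|B_{n+2}| = 2 |A_{n+1}| |B_{n+1}|`, which solve to
`|B_{n+2}| = 2^(F_{2n} + 1)`. Finally `F_n / F_{n+1} → τ⁻¹`, so
`log |B_{n+2}| / F_{2n+3} = (F_{2n} + 1) log 2 / F_{2n+3} → τ⁻³ log 2`.
-/

open Filter Topology
open Nat (fib fib_add_two fib_pos le_fib_add_one)

lemma length_of_mem_Aset_and_Bset (n : ℕ) :
    (∀ w ∈ Aset (n + 1), w.length = fib (2 * n + 2)) ∧
      (∀ w ∈ Bset (n + 1), w.length = fib (2 * n + 1)) := by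
  induction n with
  | zero => simp [Aset, Bset]
  | succ n ih =>
    obtain ⟨hA, hB⟩ := ih
    have h3 : fib (2 * (n + 1) + 1) = fib (2 * n + 1) + fib (2 * n + 2) := fib_add_two
    have h4 : fib (2 * (n + 1) + 2) = fib (2 * n + 2) + fib (2 * (n + 1) + 1) := fib_add_two
    refine ⟨?_, ?_⟩
    · rintro _ ⟨u, hu, _, ⟨x, hx, y, hy, rfl⟩, rfl⟩
      simp only [List.length_append, hB u hu, hA x hx, hA y hy]
      omega
    · rintro _ (⟨u, hu, v, hv, rfl⟩ | ⟨u, hu, v, hv, rfl⟩) <;>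
        simp only [List.length_append, hA, hB, hu, hv] <;> omega

lemma length_of_mem_Aset {n : ℕ} {w : Word} (hw : w ∈ Aset (n + 1)) :
    w.length = fib (2 * n + 2) :=
  (length_of_mem_Aset_and_Bset n).1 w hw

lemma length_of_mem_Bset {n : ℕ} {w : Word} (hw : w ∈ Bset (n + 1)) :
    w.length = fib (2 * n + 1) :=
  (length_of_mem_Aset_and_Bset n).2 w hw

lemma getLast?_of_mem_Aset {n : ℕ} {w : Word} (hw : w ∈ Aset (n + 1)) :
    w.getLast? = some .a := by
  induction n generalizing w with
  | zero => simp_all [Aset]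
  | succ n ih =>
    obtain ⟨u, -, _, ⟨x, -, y, hy, rfl⟩, rfl⟩ := hw
    simp [List.getLast?_append, ih hy]

lemma getElem?_of_mem_Aset {n : ℕ} {w : Word} (hw : w ∈ Aset (n + 2)) :
    w[fib (2 * n + 2) - 1]? = some .b := by
  induction n generalizing w with
  | zero =>
    obtain ⟨u, hu, _, ⟨x, hx, y, hy, rfl⟩, rfl⟩ := hw
    simp_all [Aset, Bset]
  | succ n ih =>
    obtain ⟨u, hu, _, ⟨x, hx, y, -, rfl⟩, rfl⟩ := hw
    have hu := length_of_mem_Bset hu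
    have hx := length_of_mem_Aset hx
    have h4 : fib (2 * (n + 1) + 2) = fib (2 * n + 2) + fib (2 * (n + 1) + 1) := fib_add_two
    have : 0 < fib (2 * n + 2) := fib_pos.2 (by omega)
    rw [List.getElem?_append_right (by omega), List.getElem?_append_left (by omega)]
    convert ih ‹_› using 2
    omega

lemma concatSet_eq_image (U V : Set Word) :
    concatSet U V = (fun p : Word × Word => p.1 ++ p.2) '' U ×ˢ V := by
  ext
  simp [concatSet, eq_comm]

lemma Set.Finite.concatSet {U V : Set Word} (hU : U.Finite) (hV : V.Finite) :
    (concatSet U V).Finite := by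
  rw [concatSet_eq_image]
  exact (hU.prod hV).image _

lemma ncard_concatSet_of_length_eq {U V : Set Word} {L : ℕ} (hL : ∀ u ∈ U, u.length = L) :
    (concatSet U V).ncard = U.ncard * V.ncard := by
  rw [concatSet_eq_image, Set.InjOn.ncard_image, Set.ncard_prod]
  rintro ⟨u, v⟩ ⟨hu, -⟩ ⟨u', v'⟩ ⟨hu', -⟩ h
  obtain ⟨rfl, rfl⟩ := List.append_inj h (by rw [hL u hu, hL u' hu'])
  rfl

lemma Aset_finite_and_Bset_finite : ∀ n, (Aset n).Finite ∧ (Bset n).Finite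
  | 0 => by simp [Aset, Bset]
  | 1 => by simp [Aset, Bset]
  | n + 2 => by
    obtain ⟨hA, hB⟩ := Aset_finite_and_Bset_finite (n + 1)
    exact ⟨hB.concatSet (hA.concatSet hA), (hA.concatSet hB).union (hB.concatSet hA)⟩

lemma disjoint_concatSet_Aset_Bset (n : ℕ) :
    Disjoint (concatSet (Aset (n + 1)) (Bset (n + 1)))
      (concatSet (Bset (n + 1)) (Aset (n + 1))) := by
  rw [Set.disjoint_left]
  rintro _ ⟨u, hu, v, -, rfl⟩ ⟨u', hu', v', hv', h⟩
  cases n with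
  | zero => simp_all [Aset, Bset]
  | succ n =>
    have hlen := length_of_mem_Aset hu
    have hlen' := length_of_mem_Bset hu'
    have h4 : fib (2 * (n + 1) + 2) = fib (2 * n + 2) + fib (2 * (n + 1) + 1) := fib_add_two
    have : 0 < fib (2 * n + 2) := fib_pos.2 (by omega)
    -- the letter at position `|u| - 1` is the last letter of `u`, but lies inside `v'`
    have ha : (u ++ v)[u.length - 1]? = some .a := by
      rw [List.getElem?_append_left (by omega), ← List.getLast?_eq_getElem?]
      exact getLast?_of_mem_Aset hu
    have hb : (u' ++ v')[u.length - 1]? = some .b := by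
      rw [List.getElem?_append_right (by omega)]
      convert getElem?_of_mem_Aset hv' using 2
      omega
    simp [h, hb] at ha

lemma ncard_Aset_add_two (n : ℕ) :
    (Aset (n + 2)).ncard = (Bset (n + 1)).ncard * (Aset (n + 1)).ncard ^ 2 := by
  rw [Aset, ncard_concatSet_of_length_eq fun _ => length_of_mem_Bset,
    ncard_concatSet_of_length_eq fun _ => length_of_mem_Aset, sq]

lemma ncard_Bset_add_two (n : ℕ) :
    (Bset (n + 2)).ncard = 2 * (Aset (n + 1)).ncard * (Bset (n + 1)).ncard := by
  obtain ⟨hA, hB⟩ := Aset_finite_and_Bset_finite (n + 1)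
  rw [Bset, Set.ncard_union_eq (disjoint_concatSet_Aset_Bset n) (hA.concatSet hB)
    (hB.concatSet hA), ncard_concatSet_of_length_eq fun _ => length_of_mem_Aset,
    ncard_concatSet_of_length_eq fun _ => length_of_mem_Bset]
  ring

lemma ncard_Aset_and_Bset (n : ℕ) :
    (Aset (n + 2)).ncard = 2 ^ (fib (2 * n + 1) - 1) ∧
      (Bset (n + 2)).ncard = 2 ^ (fib (2 * n) + 1) := by
  induction n with
  | zero =>
    rw [ncard_Aset_add_two, ncard_Bset_add_two]
    simp [Aset, Bset]
  | succ n ih =>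
    have h2 : fib (2 * (n + 1)) = fib (2 * n) + fib (2 * n + 1) := fib_add_two
    have h3 : fib (2 * (n + 1) + 1) = fib (2 * n + 1) + fib (2 * (n + 1)) := fib_add_two
    have : 0 < fib (2 * n + 1) := fib_pos.2 (by omega)
    constructor
    · rw [ncard_Aset_add_two, ih.1, ih.2, ← pow_mul, ← pow_add]
      congr 1
      omega
    · rw [ncard_Bset_add_two, ih.1, ih.2, ← pow_succ', ← pow_add]
      congr 1
      omega

open Real goldenRatio

lemma tendsto_fib_div_fib_add (k : ℕ) :
    Tendsto (fun n => (fib n : ℝ) / fib (n + k)) atTop (𝓝 (φ ^ k)⁻¹) := by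
  have hpos : ∀ᶠ n in atTop, ∀ j, (fib (n + j) : ℝ) ≠ 0 := by
    filter_upwards [eventually_ge_atTop 1] with n hn j
    exact Nat.cast_ne_zero.2 (fib_pos.2 (by omega)).ne'
  induction k with
  | zero =>
    refine tendsto_const_nhds.congr' ?_
    filter_upwards [hpos] with n hn
    simpa using (div_self (hn 0)).symm
  | succ k ih =>
    have hstep := (tendsto_add_atTop_iff_nat k).2 tendsto_fib_div_fib_succ_atTop
    rw [← inv_goldenRatio] at hstep
    rw [pow_succ, mul_inv]
    refine (ih.mul hstep).congr' ?_
    filter_upwards [hpos] with n hn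
    rw [← add_assoc, div_mul_div_cancel₀ (hn k)]

lemma tendsto_fib_atTop : Tendsto fib atTop atTop :=
  tendsto_atTop_atTop.2 fun b => ⟨b + 1, fun n hn => by linarith [le_fib_add_one n]⟩

lemma tendsto_fib_add_one_div_fib_add_three :
    Tendsto (fun n => ((fib n : ℝ) + 1) / fib (n + 3)) atTop (𝓝 (φ ^ 3)⁻¹) := by
  have h : Tendsto (fun n => ((fib (n + 3) : ℕ) : ℝ)⁻¹) atTop (𝓝 0) :=
    tendsto_inv_atTop_zero.comp <| tendsto_natCast_atTop_atTop.comp <|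
      tendsto_fib_atTop.comp (tendsto_add_atTop_nat 3)
  simpa [add_div] using (tendsto_fib_div_fib_add 3).add h

theorem entropy_limit_B :
    Filter.Tendsto
      (fun n : ℕ => Real.log ((Bset n).ncard) / (Nat.fib (2 * n - 1) : ℝ))
      Filter.atTop (nhds ((1 / tau ^ 3) * Real.log 2)) := by
  rw [← tendsto_add_atTop_iff_nat 2, one_div, show tau = φ from rfl]
  have hdouble : Tendsto (fun n : ℕ => 2 * n) atTop atTop :=
    (strictMono_mul_left_of_pos two_pos).tendsto_atTop
  have hratio := (tendsto_fib_add_one_div_fib_add_three.comp hdouble).mul_const (Real.log 2)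
  refine hratio.congr fun n => ?_
  rw [Function.comp_apply, (ncard_Aset_and_Bset n).2, show 2 * (n + 2) - 1 = 2 * n + 3 by omega]
  push_cast
  rw [Real.log_pow]
  push_cast
  ring
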